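/- Let ν₀, ν₁ > 0 and 0 < η < 1, and define the spike-and-slab penalty pen(θ) = -log[(η/(2ν₁))e^{-|θ|/ν₁} + ((1-η)/(2ν₀))e^{-|θ|/ν₀}]. Then for any δ ≠ 0, the derivative satisfies |pen'(δ)| < (1/ν₁)(1 + ξ(δ)) where ξ(δ) = (ν₁²(1-η)/(ν₀²η)) · exp(-|δ|(1/ν₀ - 1/ν₁)). In particular, if ν₀ < ν₁ and |δ| ≥ ψ with (ν₁²(1-η))/(ν₀²η) ≤ ξ·exp(ψ(1/ν₀ - 1/ν₁)), then |pen'(δ)| < (1/ν₁)(1 + ξ). -/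

import Mathlib

/-!
Away from `0`, `pen'(δ) = sign δ · (w₁/ν₁ + w₀/ν₀)/(w₁ + w₀)`, where
`w₁ = (η/(2ν₁))e^{-|δ|/ν₁}` and `w₀ = ((1-η)/(2ν₀))e^{-|δ|/ν₀}` are the two mixture
components at `|δ|`. This weighted mean of `1/ν₁` and `1/ν₀` is strictly below
`1/ν₁ + (1/ν₀)(w₀/w₁)`, and `(1/ν₀)(w₀/w₁)` is exactly `ξ(δ)/ν₁`. For `ν₀ < ν₁` the factor
`ξ(δ)` decreases in `|δ|`, which gives the second bound.
-/

/-- The BAGUS spike-and-slab penalty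
`pen(θ) = -log[(η/(2ν₁))e^{-|θ|/ν₁} + ((1-η)/(2ν₀))e^{-|θ|/ν₀}]`. -/
noncomputable def ssPenalty (ν₀ ν₁ η θ : ℝ) : ℝ :=
  -Real.log (η / (2 * ν₁) * Real.exp (-|θ| / ν₁) +
    (1 - η) / (2 * ν₀) * Real.exp (-|θ| / ν₀))

open Real

lemma abs_sign_le_one (x : ℝ) : |(SignType.sign x : ℝ)| ≤ 1 := by
  cases SignType.sign x <;> simp

lemma hasDerivAt_neg_log_laplace_mixture (a b ν₀ ν₁ : ℝ) {δ : ℝ} (hδ : δ ≠ 0)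
    (hw : a * exp (-|δ| / ν₁) + b * exp (-|δ| / ν₀) ≠ 0) :
    HasDerivAt (fun θ => -log (a * exp (-|θ| / ν₁) + b * exp (-|θ| / ν₀)))
      (SignType.sign δ * ((a * exp (-|δ| / ν₁) / ν₁ + b * exp (-|δ| / ν₀) / ν₀) /
        (a * exp (-|δ| / ν₁) + b * exp (-|δ| / ν₀)))) δ := by
  have hexp (ν c : ℝ) : HasDerivAt (fun θ => c * exp (-|θ| / ν))
      (c * (exp (-|δ| / ν) * (-SignType.sign δ / ν))) δ :=
    (((hasDerivAt_abs hδ).neg.div_const ν).exp).const_mul c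
  exact (((hexp ν₁ a).add (hexp ν₀ b)).log hw).neg.congr_deriv
    (by simp only [Pi.add_apply]; ring)

lemma weighted_mean_lt (w₀ w₁ c₀ c₁ : ℝ) (hw₀ : 0 < w₀) (hw₁ : 0 < w₁) (hc₀ : 0 < c₀)
    (hc₁ : 0 < c₁) : (w₁ * c₁ + w₀ * c₀) / (w₁ + w₀) < c₁ + c₀ * w₀ / w₁ := by
  rw [div_lt_iff₀ (by positivity)]
  have : (c₁ + c₀ * w₀ / w₁) * (w₁ + w₀) =
      w₁ * c₁ + w₀ * c₀ + (w₀ * c₁ + c₀ * w₀ ^ 2 / w₁) := by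
    field_simp
  rw [this]
  have : 0 < w₀ * c₁ + c₀ * w₀ ^ 2 / w₁ := by positivity
  linarith

lemma mul_exp_neg_le_of_le_mul_exp {C ξ k ψ t : ℝ} (hC : 0 ≤ C) (hk : 0 ≤ k) (hψt : ψ ≤ t)
    (h : C ≤ ξ * exp (ψ * k)) : C * exp (-t * k) ≤ ξ := by
  calc C * exp (-t * k) ≤ ξ * exp (ψ * k) * exp (-ψ * k) := by
        gcongr
        exact hC.trans h
    _ = ξ := by rw [mul_assoc, ← exp_add]; simp

lemma exists_hasDerivAt_ssPenalty_abs_lt {ν₀ ν₁ η δ : ℝ} (hν₀ : 0 < ν₀) (hν₁ : 0 < ν₁)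
    (hη₀ : 0 < η) (hη₁ : η < 1) (hδ : δ ≠ 0) :
    ∃ d : ℝ, HasDerivAt (ssPenalty ν₀ ν₁ η) d δ ∧
      |d| < (1 / ν₁) * (1 + ν₁ ^ 2 * (1 - η) / (ν₀ ^ 2 * η) *
        exp (-|δ| * (1 / ν₀ - 1 / ν₁))) := by
  refine ⟨_, hasDerivAt_neg_log_laplace_mixture _ _ ν₀ ν₁ hδ (by positivity), ?_⟩
  set w₁ := η / (2 * ν₁) * exp (-|δ| / ν₁)
  set w₀ := (1 - η) / (2 * ν₀) * exp (-|δ| / ν₀)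
  have hw₁ : 0 < w₁ := by positivity
  have hw₀ : 0 < w₀ := mul_pos (div_pos (by linarith) (by positivity)) (exp_pos _)
  -- the posterior odds of the spike against the slab at `|δ|`
  have hodds : w₀ / w₁ = ν₁ * (1 - η) / (ν₀ * η) * exp (-|δ| * (1 / ν₀ - 1 / ν₁)) := by
    rw [show -|δ| * (1 / ν₀ - 1 / ν₁) = -|δ| / ν₀ - -|δ| / ν₁ by ring, exp_sub]
    simp only [w₀, w₁]
    field_simp
  calc _ ≤ (w₁ / ν₁ + w₀ / ν₀) / (w₁ + w₀) := by
        rw [abs_mul, abs_of_pos (show 0 < (w₁ / ν₁ + w₀ / ν₀) / (w₁ + w₀) by positivity)]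
        exact mul_le_of_le_one_left (by positivity) (abs_sign_le_one δ)
    _ = (w₁ * (1 / ν₁) + w₀ * (1 / ν₀)) / (w₁ + w₀) := by ring
    _ < 1 / ν₁ + 1 / ν₀ * w₀ / w₁ :=
        weighted_mean_lt _ _ _ _ hw₀ hw₁ (by positivity) (by positivity)
    _ = _ := by rw [mul_div_assoc, hodds]; field_simp

/-- for `δ ≠ 0` the penalty is differentiable at `δ` with
`|pen'(δ)| < (1/ν₁)(1 + ξ(δ))` where
`ξ(δ) = (ν₁²(1-η)/(ν₀²η)) exp(-|δ|(1/ν₀ - 1/ν₁))`; in particular, if `ν₀ < ν₁`,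
`|δ| ≥ ψ > 0` and `ν₁²(1-η)/(ν₀²η) ≤ ξ·exp(ψ(1/ν₀ - 1/ν₁))`, then
`|pen'(δ)| < (1/ν₁)(1 + ξ)`. -/
theorem ssPenalty_deriv_bound (ν₀ ν₁ η : ℝ)
    (hν₀ : 0 < ν₀) (hν₁ : 0 < ν₁) (hη₀ : 0 < η) (hη₁ : η < 1) :
    (∀ δ : ℝ, δ ≠ 0 → ∃ d : ℝ, HasDerivAt (ssPenalty ν₀ ν₁ η) d δ ∧
      |d| < (1 / ν₁) * (1 + ν₁ ^ 2 * (1 - η) / (ν₀ ^ 2 * η) *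
        Real.exp (-|δ| * (1 / ν₀ - 1 / ν₁)))) ∧
    (ν₀ < ν₁ → ∀ ψ ξ δ : ℝ, 0 < ψ → ψ ≤ |δ| →
      ν₁ ^ 2 * (1 - η) / (ν₀ ^ 2 * η) ≤ ξ * Real.exp (ψ * (1 / ν₀ - 1 / ν₁)) →
      ∃ d : ℝ, HasDerivAt (ssPenalty ν₀ ν₁ η) d δ ∧ |d| < (1 / ν₁) * (1 + ξ)) := by
  refine ⟨fun δ hδ => exists_hasDerivAt_ssPenalty_abs_lt hν₀ hν₁ hη₀ hη₁ hδ, ?_⟩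
  intro hlt ψ ξ δ hψ hψδ hξ
  have hδ : δ ≠ 0 := abs_pos.mp (hψ.trans_le hψδ)
  obtain ⟨d, hd, hbound⟩ := exists_hasDerivAt_ssPenalty_abs_lt hν₀ hν₁ hη₀ hη₁ hδ
  have hrate : 0 ≤ 1 / ν₀ - 1 / ν₁ := sub_nonneg.mpr (one_div_le_one_div_of_le hν₀ hlt.le)
  have hdecay := mul_exp_neg_le_of_le_mul_exp
    (div_nonneg (mul_nonneg (sq_nonneg ν₁) (by linarith)) (by positivity)) hrate hψδ hξ
  exact ⟨d, hd, hbound.trans_le (by gcongr)⟩
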